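/- arXiv:2101.02300 — 4 statements merged into one kernel-verified Lean document; each statement's English description precedes it below -/
import Mathlib

section
/- The determinant of the covariance matrix V_z = [[Gσ₁² + (G-1)σ₂², -√(G(G-1))(σ₁² + σ₂²)], [-√(G(G-1))(σ₁² + σ₂²), Gσ₂² + (G-1)σ₁²]] equals σ₁²σ₂² for all G ≥ 1 and σ₁, σ₂ > 0. -/
open Matrix

/- Expanding, the determinant is `a b (G² + (G - 1)² - 2 G (G - 1)) = a b (G - (G - 1))² = a b`. -/
theorem det_tms_covariance_of_sq_eq {R : Type*} [CommRing R] (G s a b : R)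
    (hs : s ^ 2 = G * (G - 1)) :
    !![G * a + (G - 1) * b, -(s * (a + b)); -(s * (a + b)), G * b + (G - 1) * a].det = a * b := by
  rw [det_fin_two_of]
  linear_combination -(a + b) ^ 2 * hs

theorem tms_covariance_det_general (G σ₁ σ₂ : ℝ) (hG : 1 ≤ G) :
    (!![G * σ₁ ^ 2 + (G - 1) * σ₂ ^ 2,
        -(Real.sqrt (G * (G - 1)) * (σ₁ ^ 2 + σ₂ ^ 2));
        -(Real.sqrt (G * (G - 1)) * (σ₁ ^ 2 + σ₂ ^ 2)),
        G * σ₂ ^ 2 + (G - 1) * σ₁ ^ 2] : Matrix (Fin 2) (Fin 2) ℝ).det =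
      σ₁ ^ 2 * σ₂ ^ 2 :=
  det_tms_covariance_of_sq_eq G _ _ _
    (Real.sq_sqrt (mul_nonneg (by linarith) (by linarith)))

/-- The determinant of the per-quadrature noise covariance of the GKP-TMS code
equals `σ₁²σ₂²`. -/
theorem tms_covariance_det (G σ₁ σ₂ : ℝ) (hG : 1 ≤ G) (h1 : 0 < σ₁) (h2 : 0 < σ₂) :
    (!![G * σ₁ ^ 2 + (G - 1) * σ₂ ^ 2,
        -(Real.sqrt (G * (G - 1)) * (σ₁ ^ 2 + σ₂ ^ 2));
        -(Real.sqrt (G * (G - 1)) * (σ₁ ^ 2 + σ₂ ^ 2)),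
        G * σ₂ ^ 2 + (G - 1) * σ₁ ^ 2] : Matrix (Fin 2) (Fin 2) ℝ).det =
      σ₁ ^ 2 * σ₂ ^ 2 :=
  tms_covariance_det_general G σ₁ σ₂ hG
end

section
/- Let Z₁, Z₂ be jointly Gaussian with the GKP-TMS covariance (Var(Z₂) = σ_G² := (G-1)σ₁² + Gσ₂², Cov(Z₁,Z₂) = -√(G(G-1))(σ₁²+σ₂²), Var(Z₁|Z₂) = (σ₁σ₂/σ_G)²). Define the residual ξ = Z₁ + μ̃·R_{√(2π)}(Z₂) with μ̃ = √(G(G-1))(σ₁²+σ₂²)/σ_G². Then the probability density of ξ is Q(x) = Σ_{n∈ℤ} b_n(σ_G) · F_{σ₁σ₂/σ_G}(x + μ̃√(2π)n). -/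
open MeasureTheory Real

/-- Centered Gaussian probability density with standard deviation `σ`. -/
noncomputable def gaussPDF (σ x : ℝ) : ℝ :=
  (σ * Real.sqrt (2 * Real.pi))⁻¹ * Real.exp (-x ^ 2 / (2 * σ ^ 2))

/-- Complementary error function `Erfc x = (2/√π) ∫_x^∞ e^{-t²} dt`. -/
noncomputable def Erfc (x : ℝ) : ℝ :=
  (2 / Real.sqrt Real.pi) * ∫ t in Set.Ioi x, Real.exp (-t ^ 2)

/-- The modular-Gaussian weights `b_n(σ)`. -/
noncomputable def bCoeff (n : ℤ) (σ : ℝ) : ℝ :=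
  (1 / 2) * (Erfc (((n : ℝ) - 1 / 2) * Real.sqrt Real.pi / σ) -
    Erfc (((n : ℝ) + 1 / 2) * Real.sqrt Real.pi / σ))

/-- Generalized modulo: `R_s(z) = z - n*(z)·s` with `n*(z)` the nearest integer
to `z/s`. -/
noncomputable def Rmod (s z : ℝ) : ℝ := z - (round (z / s) : ℤ) * s

/-- Joint (per-quadrature) centered Gaussian density of `(Z₁, Z₂)` with the
GKP-TMS covariance `[[Gσ₁²+(G-1)σ₂², -√(G(G-1))(σ₁²+σ₂²)],
[-√(G(G-1))(σ₁²+σ₂²), (G-1)σ₁²+Gσ₂²]]` (whose determinant is `σ₁²σ₂²`). -/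
noncomputable def tmsJointPDF (G σ₁ σ₂ z₁ z₂ : ℝ) : ℝ :=
  (1 / (2 * Real.pi * σ₁ * σ₂)) *
    Real.exp (-(1 / (2 * σ₁ ^ 2 * σ₂ ^ 2)) *
      (((G - 1) * σ₁ ^ 2 + G * σ₂ ^ 2) * z₁ ^ 2 +
        (G * σ₁ ^ 2 + (G - 1) * σ₂ ^ 2) * z₂ ^ 2 +
        2 * Real.sqrt (G * (G - 1)) * (σ₁ ^ 2 + σ₂ ^ 2) * z₁ * z₂))

/-! Completing the square in the quadratic form of the joint density factors it as the
conditional density of `Z₁` given `Z₂` (centred Gaussian of standard deviation `σ₁σ₂/σ_G`,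
shifted by `-μ̃ Z₂`) times the marginal density of `Z₂`. Since `Z₂ - R(Z₂) = √(2π) n*(Z₂)`,
on the cell where `n*(Z₂) = n` the first factor is the constant `F(x + μ̃√(2π)n)`, and the
marginal mass of that cell is `b_n(σ_G)`. -/

section Gaussian

variable {σ : ℝ}

lemma gaussPDF_nonneg (hσ : 0 ≤ σ) (x : ℝ) : 0 ≤ gaussPDF σ x := by
  unfold gaussPDF
  positivity

lemma gaussPDF_le (hσ : 0 ≤ σ) (x : ℝ) : gaussPDF σ x ≤ (σ * √(2 * π))⁻¹ := by
  refine mul_le_of_le_one_right (by positivity) (exp_le_one_iff.mpr ?_)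
  rw [neg_div]
  exact neg_nonpos.mpr (by positivity)

lemma gaussPDF_eq_mul_exp_neg_sq (x : ℝ) :
    gaussPDF σ x = (σ * √(2 * π))⁻¹ * exp (-(x / (√2 * σ)) ^ 2) := by
  rw [gaussPDF, div_pow, mul_pow, sq_sqrt zero_le_two, neg_div]

lemma integrable_gaussPDF (hσ : σ ≠ 0) : Integrable (gaussPDF σ) := by
  refine ((integrable_exp_neg_mul_sq (b := 1 / (2 * σ ^ 2)) (by positivity)).const_mul
    (σ * √(2 * π))⁻¹).congr (ae_of_all _ fun x => ?_)
  simp only [gaussPDF]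
  congr 2
  ring

lemma Erfc_sub_Erfc (a b : ℝ) : Erfc a - Erfc b = 2 / √π * ∫ t in a..b, exp (-t ^ 2) := by
  have h : Integrable fun t : ℝ => exp (-t ^ 2) := by
    simpa using integrable_exp_neg_mul_sq one_pos
  rw [Erfc, Erfc, ← mul_sub, intervalIntegral.integral_Ioi_sub_Ioi' h.integrableOn h.integrableOn]

lemma intervalIntegral_gaussPDF (hσ : 0 < σ) (a b : ℝ) :
    ∫ z in a..b, gaussPDF σ z = (Erfc (a / (√2 * σ)) - Erfc (b / (√2 * σ))) / 2 := by
  have hc : √2 * σ ≠ 0 := by positivity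
  simp only [gaussPDF_eq_mul_exp_neg_sq]
  rw [intervalIntegral.integral_const_mul,
    intervalIntegral.integral_comp_div (fun t => exp (-t ^ 2)) hc, Erfc_sub_Erfc,
    sqrt_mul zero_le_two, smul_eq_mul]
  field_simp

end Gaussian

section RoundCell

variable {p : ℝ}

def roundCell (p : ℝ) (n : ℤ) : Set ℝ := Set.Ico ((n - 1 / 2) * p) ((n + 1 / 2) * p)

lemma mem_roundCell_iff (hp : 0 < p) {n : ℤ} {z : ℝ} :
    z ∈ roundCell p n ↔ round (z / p) = n := by
  rw [roundCell, Set.mem_Ico, ← le_div_iff₀ hp, ← div_lt_iff₀ hp, round_eq, Int.floor_eq_iff]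
  constructor <;> rintro ⟨h₁, h₂⟩ <;> constructor <;> linarith

lemma iUnion_roundCell (hp : 0 < p) : ⋃ n, roundCell p n = Set.univ :=
  Set.eq_univ_of_forall fun z => Set.mem_iUnion.mpr ⟨round (z / p), (mem_roundCell_iff hp).mpr rfl⟩

lemma pairwise_disjoint_roundCell (hp : 0 < p) : Pairwise (Function.onFun Disjoint (roundCell p)) :=
  fun _ _ hmn => Set.disjoint_left.mpr fun _ hm hn =>
    hmn (((mem_roundCell_iff hp).mp hm).symm.trans ((mem_roundCell_iff hp).mp hn))

lemma integral_comp_round_mul {C : ℝ} (hp : 0 < p) {g : ℤ → ℝ} (hg : ∀ n, ‖g n‖ ≤ C)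
    {f : ℝ → ℝ} (hf : Integrable f) :
    ∫ z, g (round (z / p)) * f z = ∑' n, g n * ∫ z in roundCell p n, f z := by
  have hround : Measurable fun z : ℝ => round (z / p) := by
    simp only [round_eq]
    exact ((measurable_id.div_const p).add_const _).floor
  have hint : Integrable fun z => g (round (z / p)) * f z :=
    hf.bdd_mul (measurable_from_top.comp hround).aestronglyMeasurable (ae_of_all _ fun _ => hg _)
  calc ∫ z, g (round (z / p)) * f z
      = ∫ z in ⋃ n, roundCell p n, g (round (z / p)) * f z := by
        rw [iUnion_roundCell hp, setIntegral_univ]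
    _ = ∑' n, ∫ z in roundCell p n, g (round (z / p)) * f z :=
        integral_iUnion (fun _ => measurableSet_Ico) (pairwise_disjoint_roundCell hp)
          hint.integrableOn
    _ = ∑' n, g n * ∫ z in roundCell p n, f z := tsum_congr fun n => by
        rw [← integral_const_mul]
        exact setIntegral_congr_fun measurableSet_Ico fun z hz => by
          rw [(mem_roundCell_iff hp).mp hz]

lemma integral_roundCell_gaussPDF {σ : ℝ} (hσ : 0 < σ) (n : ℤ) :
    ∫ z in roundCell √(2 * π) n, gaussPDF σ z = bCoeff n σ := by
  have hp : 0 < √(2 * π) := by positivity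
  rw [roundCell, integral_Ico_eq_integral_Ioc, ← intervalIntegral.integral_of_le
    (by gcongr; linarith), intervalIntegral_gaussPDF hσ, bCoeff, sqrt_mul zero_le_two]
  field_simp

end RoundCell

lemma bivariateGaussian_eq_gaussPDF_mul_gaussPDF {a b c d : ℝ} (ha : 0 < a) (hd : d ≠ 0)
    (hdet : a * c - b ^ 2 = d ^ 2) (z₁ z₂ : ℝ) :
    1 / (2 * π * d) * exp (-(1 / (2 * d ^ 2)) * (a * z₁ ^ 2 + c * z₂ ^ 2 + 2 * b * z₁ * z₂)) =
      gaussPDF (d / √a) (z₁ + b / a * z₂) * gaussPDF (√a) z₂ := by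
  rw [gaussPDF, gaussPDF, mul_mul_mul_comm, ← exp_add]
  congr 1
  · field_simp
    rw [sq_sqrt (by positivity)]
  · congr 1
    rw [div_pow, sq_sqrt ha.le]
    field_simp
    linear_combination (-z₂ ^ 2) * hdet

lemma tmsJointPDF_eq_gaussPDF_mul_gaussPDF {G σ₁ σ₂ : ℝ} (hG : 1 ≤ G) (h1 : 0 < σ₁)
    (h2 : 0 < σ₂) (z₁ z₂ : ℝ) :
    tmsJointPDF G σ₁ σ₂ z₁ z₂ =
      gaussPDF (σ₁ * σ₂ / √((G - 1) * σ₁ ^ 2 + G * σ₂ ^ 2))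
        (z₁ + √(G * (G - 1)) * (σ₁ ^ 2 + σ₂ ^ 2) / ((G - 1) * σ₁ ^ 2 + G * σ₂ ^ 2) * z₂) *
      gaussPDF (√((G - 1) * σ₁ ^ 2 + G * σ₂ ^ 2)) z₂ := by
  have hdet : ((G - 1) * σ₁ ^ 2 + G * σ₂ ^ 2) * (G * σ₁ ^ 2 + (G - 1) * σ₂ ^ 2) -
      (√(G * (G - 1)) * (σ₁ ^ 2 + σ₂ ^ 2)) ^ 2 = (σ₁ * σ₂) ^ 2 := by
    rw [mul_pow, sq_sqrt (by nlinarith)]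
    ring
  rw [← bivariateGaussian_eq_gaussPDF_mul_gaussPDF (by nlinarith) (by positivity) hdet,
    tmsJointPDF]
  ring_nf

/-- The density of the residual `ξ = Z₁ + μ̃ R_{√(2π)}(Z₂)` of the GKP-TMS code is
`Q(x) = Σ_{n∈ℤ} b_n(σ_G) F_{σ₁σ₂/σ_G}(x + μ̃√(2π)n)`, with
`σ_G = √((G-1)σ₁² + Gσ₂²)` and `μ̃ = √(G(G-1))(σ₁²+σ₂²)/σ_G²`. -/
theorem tms_residual_density (G σ₁ σ₂ : ℝ) (hG : 1 ≤ G) (h1 : 0 < σ₁) (h2 : 0 < σ₂)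
    (x : ℝ) :
    (∫ z₂ : ℝ, tmsJointPDF G σ₁ σ₂
        (x - (Real.sqrt (G * (G - 1)) * (σ₁ ^ 2 + σ₂ ^ 2) /
            ((G - 1) * σ₁ ^ 2 + G * σ₂ ^ 2)) * Rmod (Real.sqrt (2 * Real.pi)) z₂) z₂) =
      ∑' n : ℤ, bCoeff n (Real.sqrt ((G - 1) * σ₁ ^ 2 + G * σ₂ ^ 2)) *
        gaussPDF (σ₁ * σ₂ / Real.sqrt ((G - 1) * σ₁ ^ 2 + G * σ₂ ^ 2))
          (x + (Real.sqrt (G * (G - 1)) * (σ₁ ^ 2 + σ₂ ^ 2) /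
              ((G - 1) * σ₁ ^ 2 + G * σ₂ ^ 2)) * Real.sqrt (2 * Real.pi) * (n : ℝ)) := by
  set σG := √((G - 1) * σ₁ ^ 2 + G * σ₂ ^ 2) with hσG_def
  set μ := √(G * (G - 1)) * (σ₁ ^ 2 + σ₂ ^ 2) / ((G - 1) * σ₁ ^ 2 + G * σ₂ ^ 2) with hμ_def
  have hσG : 0 < σG := sqrt_pos.mpr (by nlinarith)
  have hc : 0 ≤ σ₁ * σ₂ / σG := by positivity
  calc ∫ z, tmsJointPDF G σ₁ σ₂ (x - μ * Rmod √(2 * π) z) z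
      = ∫ z, gaussPDF (σ₁ * σ₂ / σG) (x + μ * √(2 * π) * round (z / √(2 * π))) *
          gaussPDF σG z := by
        congr 1 with z
        rw [tmsJointPDF_eq_gaussPDF_mul_gaussPDF hG h1 h2, ← hσG_def, ← hμ_def, Rmod]
        ring_nf
    _ = ∑' n : ℤ, gaussPDF (σ₁ * σ₂ / σG) (x + μ * √(2 * π) * n) *
          ∫ z in roundCell √(2 * π) n, gaussPDF σG z :=
        integral_comp_round_mul
          (g := fun n : ℤ => gaussPDF (σ₁ * σ₂ / σG) (x + μ * √(2 * π) * n)) (by positivity)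
          (fun _ => (norm_of_nonneg (gaussPDF_nonneg hc _)).trans_le (gaussPDF_le hc _))
          (integrable_gaussPDF hσG.ne')
    _ = ∑' n : ℤ, bCoeff n σG * gaussPDF (σ₁ * σ₂ / σG) (x + μ * √(2 * π) * n) :=
        tsum_congr fun n => by rw [integral_roundCell_gaussPDF hσG, mul_comm]
end

section
/- For any real symmetric positive semidefinite 2n×2n matrix W that commutes with Ω (equivalently, is symmetric under exchange of position and momentum quadratures in each mode pair), there exists an orthogonal symplectic matrix O such that Oᵀ W O is diagonal with the two diagonal entries in each mode pair equal. -/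
open Matrix

/-- The standard symplectic form `Ω = Diag(J, …, J)` with `J = [[0,1],[-1,0]]`,
on `n` mode pairs indexed by `Fin n × Fin 2`. -/
def OmegaN (n : ℕ) : Matrix (Fin n × Fin 2) (Fin n × Fin 2) ℝ :=
  fun p q => if p.1 = q.1 then (!![0, 1; -1, 0] : Matrix (Fin 2) (Fin 2) ℝ) p.2 q.2 else 0

/-!
Identify `ℝ^{2n}` with `ℂ^n`, mode `k` carrying the real and imaginary parts of the `k`-th
coordinate. A real matrix commutes with `Ω`, the realification of multiplication by `-i`,
exactly when it is the realification of a complex matrix `Z`, and it is symmetric exactly when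
`Z` is Hermitian. Since realification turns `ᴴ` into `ᵀ`, the realification of a unitary
matrix is orthogonal and commutes with `Ω`, hence is symplectic. Diagonalizing `Z` by a
unitary matrix therefore diagonalizes `W` by an orthogonal symplectic one, and every real
eigenvalue of `Z` appears twice, once in each quadrature of its mode.
-/

open Complex

lemma leftMulMatrix_complex_conj (z : ℂ) :
    Algebra.leftMulMatrix basisOneI (starRingEnd ℂ z) = (Algebra.leftMulMatrix basisOneI z)ᵀ := by
  rw [Algebra.leftMulMatrix_complex, Algebra.leftMulMatrix_complex]
  ext i j
  fin_cases i <;> fin_cases j <;> simp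

lemma exists_leftMulMatrix_complex_eq_of_commute {A : Matrix (Fin 2) (Fin 2) ℝ}
    (h : Commute A !![0, 1; -1, 0]) : ∃ z : ℂ, Algebra.leftMulMatrix basisOneI z = A := by
  have h10 : A 1 0 = -A 0 1 := by simpa [mul_apply] using (congrFun₂ h.eq 0 0).symm
  have h11 : A 1 1 = A 0 0 := by simpa [mul_apply] using (congrFun₂ h.eq 0 1).symm
  refine ⟨⟨A 0 0, A 1 0⟩, ?_⟩
  rw [Algebra.leftMulMatrix_complex]
  ext i j
  fin_cases i <;> fin_cases j <;> simp [h10, h11]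

namespace Matrix

variable {ι : Type*} [Fintype ι] [DecidableEq ι]

/-- Each entry `z` becomes the block `!![z.re, -z.im; z.im, z.re]` (`Algebra.leftMulMatrix_complex`). -/
noncomputable def realify : Matrix ι ι ℂ →ₐ[ℝ] Matrix (ι × Fin 2) (ι × Fin 2) ℝ :=
  (compAlgEquiv ι (Fin 2) ℝ ℝ).toAlgHom.comp (Algebra.leftMulMatrix basisOneI).mapMatrix

lemma realify_eq_comp_map (M : Matrix ι ι ℂ) :
    realify M = comp ι ι (Fin 2) (Fin 2) ℝ (M.map (Algebra.leftMulMatrix basisOneI)) := rfl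

lemma realify_apply (M : Matrix ι ι ℂ) (p q : ι × Fin 2) :
    realify M p q = Algebra.leftMulMatrix basisOneI (M p.1 q.1) p.2 q.2 := rfl

lemma realify_injective : Function.Injective (realify : Matrix ι ι ℂ → _) :=
  (compAlgEquiv ι (Fin 2) ℝ ℝ).injective.comp
    (map_injective (Algebra.leftMulMatrix_injective basisOneI))

lemma realify_conjTranspose (M : Matrix ι ι ℂ) : realify Mᴴ = (realify M)ᵀ := by
  ext p q
  simp [realify_apply, leftMulMatrix_complex_conj]

lemma realify_isHermitian_iff {M : Matrix ι ι ℂ} : (realify M).IsHermitian ↔ M.IsHermitian := by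
  rw [IsHermitian, IsHermitian, conjTranspose_eq_transpose_of_trivial, ← realify_conjTranspose,
    realify_injective.eq_iff]

lemma transpose_realify_mul_realify_mul_realify (U M : Matrix ι ι ℂ) :
    (realify U)ᵀ * realify M * realify U = realify (Uᴴ * M * U) := by
  rw [← realify_conjTranspose, map_mul, map_mul]

lemma realify_diagonal_ofReal (d : ι → ℝ) :
    realify (diagonal fun i => (d i : ℂ)) = diagonal fun p => d p.1 := by
  ext ⟨i, a⟩ ⟨j, b⟩
  rw [realify_apply, Algebra.leftMulMatrix_complex]
  by_cases hij : i = j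
  · subst hij
    fin_cases a <;> fin_cases b <;> simp
  · fin_cases a <;> fin_cases b <;> simp [hij]

/-- Viewing `W` as a matrix of `2 × 2` blocks, commuting with `realify (-I)` means that every
block commutes with the realification of `-i`, so every block is the realification of an entry. -/
lemma exists_realify_eq_of_commute {W : Matrix (ι × Fin 2) (ι × Fin 2) ℝ}
    (h : Commute W (realify (scalar ι (-I)))) : ∃ Z, realify Z = W := by
  set B := (comp ι ι (Fin 2) (Fin 2) ℝ).symm W
  have hJ : (diagonal fun _ : ι => -I).map (Algebra.leftMulMatrix basisOneI) =
      diagonal fun _ => !![0, 1; -1, 0] := by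
    rw [diagonal_map (map_zero _), Algebra.leftMulMatrix_complex]
    simp
  have hB : ∀ i j, Commute (B i j) !![0, 1; -1, 0] := by
    intro i j
    have := congrFun₂ (h.map (compRingEquiv ι (Fin 2) ℝ).symm).eq i j
    simp only [realify_eq_comp_map, compRingEquiv_symm_apply, Equiv.symm_apply_apply,
      scalar_apply, hJ, mul_diagonal, diagonal_mul] at this
    exact this
  choose Z hZ using fun i j => exists_leftMulMatrix_complex_eq_of_commute (hB i j)
  refine ⟨of Z, ?_⟩
  rw [realify_eq_comp_map, ← Equiv.eq_symm_apply]
  exact ext hZ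

end Matrix

lemma OmegaN_eq_realify (n : ℕ) : OmegaN n = realify (scalar (Fin n) (-I)) := by
  ext ⟨i, a⟩ ⟨j, b⟩
  rw [realify_apply, Algebra.leftMulMatrix_complex]
  by_cases hij : i = j
  · subst hij
    fin_cases a <;> fin_cases b <;> simp [OmegaN]
  · fin_cases a <;> fin_cases b <;> simp [OmegaN, hij]

/-- Any real symmetric positive semidefinite noise-correlation matrix `W` that
commutes with `Ω` (symmetric between position and momentum quadratures) is
diagonalized by an orthogonal symplectic matrix `O`, with the two diagonal entries
of each mode pair equal. -/
theorem symmetric_noise_symplectic_diagonalization (n : ℕ)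
    (W : Matrix (Fin n × Fin 2) (Fin n × Fin 2) ℝ)
    (hW : W.PosSemidef) (hcomm : W * OmegaN n = OmegaN n * W) :
    ∃ O : Matrix (Fin n × Fin 2) (Fin n × Fin 2) ℝ,
      Oᵀ * O = 1 ∧ Oᵀ * OmegaN n * O = OmegaN n ∧
      ∃ d : Fin n → ℝ, Oᵀ * W * O = Matrix.diagonal fun p => d p.1 := by
  rw [OmegaN_eq_realify] at hcomm ⊢
  obtain ⟨Z, rfl⟩ := exists_realify_eq_of_commute hcomm
  have hZ : Z.IsHermitian := realify_isHermitian_iff.mp hW.1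
  set U : Matrix (Fin n) (Fin n) ℂ := ↑hZ.eigenvectorUnitary
  have hU : Uᴴ * U = 1 := Unitary.coe_star_mul_self hZ.eigenvectorUnitary
  have hdiag : Uᴴ * Z * U = diagonal (RCLike.ofReal ∘ hZ.eigenvalues) := by
    rw [← star_eq_conjTranspose, ← Unitary.conjStarAlgAut_star_apply (S := ℂ)]
    exact hZ.conjStarAlgAut_star_eigenvectorUnitary
  refine ⟨realify U, ?_, ?_, hZ.eigenvalues, ?_⟩
  · rw [← realify_conjTranspose, ← map_mul, hU, map_one]
  · rw [transpose_realify_mul_realify_mul_realify, ← (scalar_commute _ (Commute.all _) Uᴴ).eq,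
      Matrix.mul_assoc, hU, Matrix.mul_one]
  · rw [transpose_realify_mul_realify_mul_realify, hdiag]
    exact realify_diagonal_ofReal hZ.eigenvalues
end

section
/- The asymptotic fixed-point approximation: for small ε > 0 with ε := σ₁²σ₂², the solution x* of x = (4/π)·ln(π/(ε√x)) satisfies x* = (4/π)·ln(π^{3/2}/(2ε)) + o(ln(1/ε)) as ε → 0; in particular x* / ((4/π) ln(1/ε)) → 1 as ε → 0⁺. -/
open Real Filter Asymptotics

/-!
Put `L = log (1/ε)`. Taking logarithms, the fixed-point equation becomes
`π x + 2 log x = 4 (log π + L)`. For large `L` this forces `1 ≤ x ≤ (4/π)(log π + L)`, so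
`0 ≤ log x ≤ log (O(L)) = o(L)`, and therefore `x = (4/π)(log π + L) - (2/π) log x`
equals `(4/π) L` up to a constant plus `o(L)`.
-/

lemma tendsto_log_one_div_nhdsGT_zero :
    Tendsto (fun ε : ℝ => log (1 / ε)) (nhdsWithin 0 (Set.Ioi 0)) atTop := by
  simpa only [one_div, Function.comp_def] using tendsto_log_atTop.comp tendsto_inv_nhdsGT_zero

lemma pi_mul_add_two_log_eq_of_eq_log {ε y : ℝ} (hε : 0 < ε) (hy : 0 < y)
    (h : y = 4 / π * log (π / (ε * √y))) :
    π * y + 2 * log y = 4 * (log π + log (1 / ε)) := by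
  rw [log_div pi_pos.ne' (by positivity), log_mul hε.ne' (sqrt_pos.2 hy).ne',
    log_sqrt hy.le] at h
  rw [one_div, log_inv]
  field_simp at h
  linarith

lemma one_le_of_le_mul_add_mul_log {a b y : ℝ} (ha : 0 < a) (hb : 0 ≤ b) (hy : 0 < y)
    (h : a ≤ a * y + b * log y) : 1 ≤ y := by
  by_contra! hy1
  have hlog : b * log y ≤ 0 := mul_nonpos_of_nonneg_of_nonpos hb (log_neg hy hy1).le
  nlinarith

lemma isLittleO_log_of_one_le_of_le {α : Type*} {l : Filter α} {f g : α → ℝ}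
    (hg : Tendsto g l atTop) (hf : ∀ᶠ t in l, 1 ≤ f t ∧ f t ≤ g t) :
    (fun t => log (f t)) =o[l] g := by
  have hlog : (fun t => log (f t)) =O[l] fun t => log (g t) := by
    refine IsBigO.of_bound 1 ?_
    filter_upwards [hf] with t ⟨hf1, hfg⟩
    rw [one_mul, norm_of_nonneg (log_nonneg hf1), norm_of_nonneg (log_nonneg (hf1.trans hfg))]
    exact log_le_log (by linarith) hfg
  exact hlog.trans_isLittleO (isLittleO_log_id_atTop.comp_tendsto hg)

section FixedPoint

variable {α : Type*} {l : Filter α} {y L : α → ℝ}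

lemma const_isLittleO_of_tendsto_atTop (hL : Tendsto L l atTop) (c : ℝ) :
    (fun _ => c) =o[l] L :=
  (isLittleO_const_id_atTop c).comp_tendsto hL

theorem sub_isLittleO_of_pi_mul_add_two_log_eq (hL : Tendsto L l atTop)
    (hy : ∀ᶠ t in l, 0 < y t ∧ π * y t + 2 * log (y t) = 4 * (log π + L t)) :
    (fun t => y t - 4 / π * (log π + L t)) =o[l] L := by
  have hM : Tendsto (fun t => 4 / π * (log π + L t)) l atTop :=
    (tendsto_atTop_add_const_left l _ hL).const_mul_atTop (by positivity)
  have hMO : (fun t => 4 / π * (log π + L t)) =O[l] L :=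
    ((const_isLittleO_of_tendsto_atTop hL _).isBigO.add (isBigO_refl L l)).const_mul_left _
  have hlog_pi : 0 ≤ log π := log_nonneg (by linarith [pi_gt_three])
  have hbounds : ∀ᶠ t in l, 1 ≤ y t ∧ y t ≤ 4 / π * (log π + L t) := by
    filter_upwards [hy, hL.eventually_ge_atTop 1] with t ⟨hpos, heq⟩ hL1
    have hy1 : 1 ≤ y t :=
      one_le_of_le_mul_add_mul_log pi_pos zero_le_two hpos (by linarith [pi_le_four])
    refine ⟨hy1, ?_⟩
    rw [div_mul_eq_mul_div, le_div_iff₀ pi_pos]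
    linarith [log_nonneg hy1]
  have hlog : (fun t => log (y t)) =o[l] L :=
    (isLittleO_log_of_one_le_of_le hM hbounds).trans_isBigO hMO
  refine (hlog.const_mul_left (-2 / π)).congr' ?_ EventuallyEq.rfl
  filter_upwards [hy] with t ⟨_, heq⟩
  field_simp
  linarith

end FixedPoint

/-- Asymptotic fixed-point approximation for the optimal gain in the GKP-TMS
optimization: if `x*(ε)` solves `x = (4/π)·ln(π/(ε√x))` (with `x*(ε) > 0`) for
small `ε = σ₁²σ₂² > 0`, then
`x*(ε) = (4/π)·ln(π^{3/2}/(2ε)) + o(ln(1/ε))` as `ε → 0⁺`; in particular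
`x*(ε)/((4/π)ln(1/ε)) → 1`. -/
theorem tms_fixed_point_asymptotics (x : ℝ → ℝ)
    (hx : ∀ ε ∈ Set.Ioo (0 : ℝ) 1, 0 < x ε ∧
      x ε = (4 / Real.pi) * Real.log (Real.pi / (ε * Real.sqrt (x ε)))) :
    (fun ε => x ε - (4 / Real.pi) * Real.log (Real.pi ^ ((3 : ℝ) / 2) / (2 * ε)))
        =o[nhdsWithin 0 (Set.Ioi 0)] (fun ε => Real.log (1 / ε)) ∧
    Tendsto (fun ε => x ε / ((4 / Real.pi) * Real.log (1 / ε)))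
      (nhdsWithin 0 (Set.Ioi 0)) (nhds 1) := by
  have hL := tendsto_log_one_div_nhdsGT_zero
  have hIoo : Set.Ioo (0 : ℝ) 1 ∈ nhdsWithin 0 (Set.Ioi 0) := Ioo_mem_nhdsGT one_pos
  have hmain := sub_isLittleO_of_pi_mul_add_two_log_eq hL <| by
    filter_upwards [hIoo] with ε hε
    exact ⟨(hx ε hε).1, pi_mul_add_two_log_eq_of_eq_log hε.1 (hx ε hε).1 (hx ε hε).2⟩
  have hconst := const_isLittleO_of_tendsto_atTop hL
  constructor
  · refine (hmain.add (hconst (4 / π * (log π - log (π ^ ((3 : ℝ) / 2) / 2))))).congr' ?_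
      EventuallyEq.rfl
    filter_upwards [hIoo] with ε hε
    have hsplit : π ^ ((3 : ℝ) / 2) / (2 * ε) = π ^ ((3 : ℝ) / 2) / 2 * (1 / ε) := by ring
    rw [hsplit, log_mul (by positivity) (one_div_pos.2 hε.1).ne']
    ring
  · have hequiv : x ~[nhdsWithin 0 (Set.Ioi 0)] fun ε => 4 / π * log (1 / ε) :=
      ((hmain.add (hconst (4 / π * log π))).congr_left fun ε => by
        simp only [Pi.sub_apply]; ring).trans_isBigO (isBigO_self_const_mul (by positivity) _ _)
    refine (isEquivalent_iff_tendsto_one ?_).1 hequiv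
    filter_upwards [hL.eventually_gt_atTop 0] with ε hε
    positivity
end
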